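/- Let A be a λ-lattice with a unary operation ' satisfying conditions (D2) and (F2), and let ⊙ and → denote the Sasaki operations on A defined by x ⊙ y := (x ⊔ y') ⊓ y and x → y := x' ⊔ (x ⊓ y). Then ⊙ and → satisfy condition (A2) with respect to the induced order: for all x,y,z, x ≤ y → z implies x ⊙ y ≤ z. -/

import Mathlib

/-- A λ-lattice: two commutative binary operations satisfying the weak
associativity laws and the absorption laws. -/
structure LambdaLattice (A : Type*) where
  sup : A → A → A
  inf : A → A → A
  sup_comm : ∀ x y, sup x y = sup y x
  inf_comm : ∀ x y, inf x y = inf y x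
  sup_assoc : ∀ x y z, sup x (sup (sup x y) z) = sup (sup x y) z
  inf_assoc : ∀ x y z, inf x (inf (inf x y) z) = inf (inf x y) z
  absorb_sup : ∀ x y, sup x (inf x y) = x
  absorb_inf : ∀ x y, inf x (sup x y) = x

/-- The induced order of a λ-lattice: `x ≤ y` iff `x ⊔ y = y`. -/
def LambdaLattice.le {A : Type*} (L : LambdaLattice A) (x y : A) : Prop :=
  L.sup x y = y

/-!
Write `s = y' ⊔ (y ⊓ z)` for `y → z`. The λ-lattice laws give `s ⊔ y' = s`, so (F2) bounds
`x ⊙ y` by `s ⊓ y`, which (D2) bounds by `y ⊓ z ≤ z`. Weak associativity is exactly what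
makes the induced order transitive.
-/

namespace LambdaLattice

variable {A : Type*} (L : LambdaLattice A)

theorem le_trans {x y z : A} (hxy : L.le x y) (hyz : L.le y z) : L.le x z := by
  have h := L.sup_assoc x y z
  rwa [hxy, hyz] at h

theorem sup_idem (x : A) : L.sup x x = x :=
  calc L.sup x x = L.sup x (L.inf x (L.sup x x)) := by rw [L.absorb_inf]
    _ = x := L.absorb_sup x _

theorem le_sup_left (x y : A) : L.le x (L.sup x y) := by
  have h := L.sup_assoc x y (L.sup x y)
  rwa [L.sup_idem] at h

theorem sup_sup_self (x y : A) : L.sup (L.sup x y) x = L.sup x y :=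
  (L.sup_comm _ _).trans (L.le_sup_left x y)

theorem inf_le_right (x y : A) : L.le (L.inf x y) y := by
  unfold LambdaLattice.le
  rw [L.sup_comm, L.inf_comm, L.absorb_sup]

end LambdaLattice

/-- In a λ-lattice with a unary operation `c` satisfying conditions
(D2) and (F2), the Sasaki operations satisfy condition (A2) with respect to the
induced order. -/
theorem sasaki_stmt_15 {A : Type*} (L : LambdaLattice A) (c : A → A)
    (D2 : ∀ x y : A, L.le (L.inf (L.sup (c x) (L.inf x y)) x) (L.inf x y))
    (F2 : ∀ x y z : A, L.le x (L.sup (c y) (L.inf y z)) →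
      L.le (L.inf (L.sup x (c y)) y) (L.inf (L.sup (L.sup (c y) (L.inf y z)) (c y)) y)) :
    ∀ x y z : A, L.le x (L.sup (c y) (L.inf y z)) → L.le (L.inf (L.sup x (c y)) y) z := by
  intro x y z h
  have hF := F2 x y z h
  rw [L.sup_sup_self] at hF
  exact L.le_trans (L.le_trans hF (D2 y z)) (L.inf_le_right y z)
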